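/- arXiv:1510.08207 — 2 statements merged into one kernel-verified Lean document; each statement's English description precedes it below -/
import Mathlib

section
/- Let R be a finite (not necessarily unital) ring with |Cent(R)| = 5, and let A, B, C, D be its four proper centralizers (the elements of Cent(R) other than R itself). Then |R| = |A| + |B| + |C| + |D| − 3|Z(R)|. -/
/-- The centralizer of `r` in a (not necessarily unital) ring: `{s | r*s = s*r}`. -/
def rCentralizer {R : Type*} [NonUnitalRing R] (r : R) : Set R := {s | r * s = s * r}

/-- The set of all centralizers of elements of `R`. -/
def Cent (R : Type*) [NonUnitalRing R] : Set (Set R) :=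
  Set.range (fun r : R => rCentralizer r)

/-- The center of a (not necessarily unital) ring, as a set. -/
def rCenter (R : Type*) [NonUnitalRing R] : Set R := {s | ∀ r : R, r * s = s * r}

/-!
With at most five centralizers, commuting noncentral elements have the same centralizer. A
noncentral `x` misses at least two proper centralizers, `C(f)` and `C(f + x)` for any `f` not
commuting with `x`, so it lies in at most two of them. If `C(x) ⊊ C(y) ≠ R` and `g ∉ C(y)`, the
centralizers of `g`, `g + x`, `g + x + y` are among the two proper centralizers other than `C(x)`
and `C(y)`, and consecutive ones differ, so `C(g + x + y) = C(g)`: then `g` commutes with `x + y`,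
and `x` would lie in three proper centralizers. Hence distinct proper centralizers meet in `Z(R)`;
as they cover `R`, inclusion–exclusion gives the formula.
-/

theorem Set.eq_or_eq_of_encard_le_five {α : Type*} {S : Set α} (hS : S.encard ≤ 5)
    {a b c d e x : α} (ha : a ∈ S) (hb : b ∈ S) (hc : c ∈ S) (hd : d ∈ S) (he : e ∈ S)
    (hab : a ≠ b) (hac : a ≠ c) (had : a ≠ d) (hae : a ≠ e) (hbc : b ≠ c) (hbd : b ≠ d)
    (hbe : b ≠ e) (hcd : c ≠ d) (hce : c ≠ e) (hde : d ≠ e) (hx : x ∈ S) :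
    x = a ∨ x = b ∨ x = c ∨ x = d ∨ x = e := by
  by_contra! hne
  obtain ⟨hxa, hxb, hxc, hxd, hxe⟩ := hne
  have hsub : ({x, a, b, c, d, e} : Set α) ⊆ S := by
    simp only [Set.insert_subset_iff, Set.singleton_subset_iff]
    exact ⟨hx, ha, hb, hc, hd, he⟩
  have h6 : ({x, a, b, c, d, e} : Set α).encard = 6 := by
    rw [Set.encard_insert_of_notMem (by simp [*]), Set.encard_insert_of_notMem (by simp [*]),
      Set.encard_insert_of_notMem (by simp [*]), Set.encard_insert_of_notMem (by simp [*]),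
      Set.encard_pair hde]
    norm_num
  have h65 := (Set.encard_le_encard hsub).trans hS
  rw [h6] at h65
  norm_num at h65

theorem Set.ncard_union_add_ncard_of_inter_subset {α : Type*} [Finite α] {S T Z : Set α}
    (hZS : Z ⊆ S) (hZT : Z ⊆ T) (hST : S ∩ T ⊆ Z) :
    (S ∪ T).ncard + Z.ncard = S.ncard + T.ncard := by
  rw [← Set.ncard_union_add_ncard_inter S T, hST.antisymm (Set.subset_inter hZS hZT)]

section rCentralizer

variable {R : Type*} [NonUnitalRing R]

theorem mem_rCentralizer {r s : R} : s ∈ rCentralizer r ↔ r * s = s * r := Iff.rfl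

theorem mem_rCentralizer_comm {r s : R} : s ∈ rCentralizer r ↔ r ∈ rCentralizer s :=
  eq_comm

theorem mem_rCentralizer_self (r : R) : r ∈ rCentralizer r := rfl

theorem rCenter_subset_rCentralizer (r : R) : rCenter R ⊆ rCentralizer r :=
  fun _ hz => hz r

theorem rCentralizer_eq_univ_iff {r : R} : rCentralizer r = Set.univ ↔ r ∈ rCenter R := by
  simp only [Set.eq_univ_iff_forall, mem_rCentralizer, rCenter, Set.mem_ofPred_eq, eq_comm]

theorem add_mem_rCentralizer_iff {r s t : R} (ht : t ∈ rCentralizer r) :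
    s + t ∈ rCentralizer r ↔ s ∈ rCentralizer r := by
  simp only [mem_rCentralizer, mul_add, add_mul, mem_rCentralizer.1 ht, add_left_inj]

theorem mem_rCentralizer_add_self_iff {r s : R} :
    r ∈ rCentralizer (r + s) ↔ r ∈ rCentralizer s := by
  simp only [mem_rCentralizer, mul_add, add_mul, add_right_inj]

theorem rCentralizer_inter_rCentralizer_add_subset (r s : R) :
    rCentralizer r ∩ rCentralizer (r + s) ⊆ rCentralizer s := fun t ⟨hr, hrs⟩ => by
  rw [mem_rCentralizer, add_mul, mul_add, mem_rCentralizer.1 hr, add_right_inj] at hrs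
  exact hrs

theorem rCentralizer_add_ne_self {r s : R} (h : r ∉ rCentralizer s) :
    rCentralizer (r + s) ≠ rCentralizer r := fun heq =>
  h (mem_rCentralizer_add_self_iff.1 (heq ▸ mem_rCentralizer_self r))

theorem rCentralizer_ne_univ_of_notMem {r s : R} (h : r ∉ rCentralizer s) :
    rCentralizer r ≠ Set.univ := fun hu => h (mem_rCentralizer_comm.1 (hu ▸ Set.mem_univ s))

theorem rCenter_subset_of_mem_Cent {X : Set R} (hX : X ∈ Cent R) : rCenter R ⊆ X := by
  obtain ⟨r, rfl⟩ := hX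
  exact rCenter_subset_rCentralizer r

theorem univ_mem_Cent : Set.univ ∈ Cent R :=
  ⟨0, rCentralizer_eq_univ_iff.2 fun r => by rw [mul_zero, zero_mul]⟩

theorem rCentralizer_eq_or_eq_or_eq_of_mem (h5 : (Cent R).encard ≤ 5) {x a b c : R}
    (hx : x ∉ rCenter R) (ha : x ∈ rCentralizer a) (hb : x ∈ rCentralizer b)
    (hc : x ∈ rCentralizer c) (ha' : rCentralizer a ≠ Set.univ)
    (hb' : rCentralizer b ≠ Set.univ) (hc' : rCentralizer c ≠ Set.univ) :
    rCentralizer a = rCentralizer b ∨ rCentralizer a = rCentralizer c ∨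
      rCentralizer b = rCentralizer c := by
  by_contra! hne
  obtain ⟨hab, hac, hbc⟩ := hne
  obtain ⟨f, hf⟩ : ∃ f, x ∉ rCentralizer f := by
    simpa [rCenter, mem_rCentralizer] using hx
  have hfx : x ∉ rCentralizer (f + x) := by
    rwa [mem_rCentralizer_comm, add_mem_rCentralizer_iff (mem_rCentralizer_self x),
      ← mem_rCentralizer_comm]
  rcases Set.eq_or_eq_of_encard_le_five h5 univ_mem_Cent (Set.mem_range_self a)
      (Set.mem_range_self b) (Set.mem_range_self c) (Set.mem_range_self f) ha'.symm hb'.symm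
      hc'.symm (rCentralizer_ne_univ_of_notMem (mem_rCentralizer_comm.not.1 hf)).symm hab hac
      (ne_of_mem_of_not_mem' ha hf) hbc (ne_of_mem_of_not_mem' hb hf)
      (ne_of_mem_of_not_mem' hc hf) (Set.mem_range_self (f + x)) with h | h | h | h | h
  · exact hfx (h ▸ Set.mem_univ x)
  · exact hfx (h ▸ ha)
  · exact hfx (h ▸ hb)
  · exact hfx (h ▸ hc)
  · exact rCentralizer_add_ne_self (mem_rCentralizer_comm.not.1 hf) h

theorem rCentralizer_add_add_eq_of_ssubset (h5 : (Cent R).encard ≤ 5) {x y g : R}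
    (hxy : rCentralizer x ⊂ rCentralizer y) (hy : rCentralizer y ≠ Set.univ)
    (hg : g ∉ rCentralizer y) : rCentralizer (g + x + y) = rCentralizer g := by
  have hx : rCentralizer x ≠ Set.univ := ne_top_of_le_ne_top hy hxy.subset
  have hgx : g + x ∉ rCentralizer y := by
    rwa [add_mem_rCentralizer_iff (hxy.subset (mem_rCentralizer_self x))]
  have hgxy : g + x + y ∉ rCentralizer y := by
    rwa [add_mem_rCentralizer_iff (mem_rCentralizer_self y)]
  have notMem_x : ∀ {r}, r ∉ rCentralizer y → r ∉ rCentralizer x := fun hr h => hr (hxy.subset h)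
  have ne_x : ∀ {r}, r ∉ rCentralizer y → rCentralizer r ≠ rCentralizer x :=
    fun hr => ne_of_mem_of_not_mem' (mem_rCentralizer_self _) (notMem_x hr)
  have ne_y : ∀ {r}, r ∉ rCentralizer y → rCentralizer r ≠ rCentralizer y :=
    fun hr => ne_of_mem_of_not_mem' (mem_rCentralizer_self _) hr
  have ne_univ : ∀ {r}, r ∉ rCentralizer y → rCentralizer r ≠ Set.univ :=
    fun hr => rCentralizer_ne_univ_of_notMem hr
  rcases Set.eq_or_eq_of_encard_le_five h5 univ_mem_Cent (Set.mem_range_self x)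
      (Set.mem_range_self y) (Set.mem_range_self g) (Set.mem_range_self (g + x)) hx.symm hy.symm
      (ne_univ hg).symm (ne_univ hgx).symm hxy.ne (ne_x hg).symm (ne_x hgx).symm (ne_y hg).symm
      (ne_y hgx).symm (rCentralizer_add_ne_self (notMem_x hg)).symm
      (Set.mem_range_self (g + x + y)) with h | h | h | h | h
  · exact absurd h (ne_univ hgxy)
  · exact absurd h (ne_x hgxy)
  · exact absurd h (ne_y hgxy)
  · exact h
  · exact absurd h (rCentralizer_add_ne_self hgx)

theorem rCentralizer_eq_of_subset (h5 : (Cent R).encard ≤ 5) {x y : R}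
    (hxy : rCentralizer x ⊆ rCentralizer y) (hy : rCentralizer y ≠ Set.univ) :
    rCentralizer x = rCentralizer y := by
  by_contra hne
  have hx : rCentralizer x ≠ Set.univ := ne_top_of_le_ne_top hy hxy
  have hx_y : x ∈ rCentralizer y := hxy (mem_rCentralizer_self x)
  obtain ⟨g, hg⟩ := (Set.ne_univ_iff_exists_notMem _).1 hy
  have hg_xy : g ∈ rCentralizer (x + y) := by
    rw [← mem_rCentralizer_add_self_iff, ← add_assoc,
      rCentralizer_add_add_eq_of_ssubset h5 (hxy.ssubset_of_ne hne) hy hg]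
    exact mem_rCentralizer_self g
  by_cases hu : rCentralizer (x + y) = Set.univ
  · refine hne (hxy.antisymm fun t ht => rCentralizer_inter_rCentralizer_add_subset y x ⟨ht, ?_⟩)
    rw [add_comm, hu]
    trivial
  · rcases rCentralizer_eq_or_eq_or_eq_of_mem h5 (mt rCentralizer_eq_univ_iff.2 hx)
      (mem_rCentralizer_self x) hx_y (mem_rCentralizer_add_self_iff.2 hx_y) hx hy hu
      with h | h | h
    · exact hne h
    · exact hg (hxy (h ▸ hg_xy))
    · exact hg (h ▸ hg_xy)

theorem rCentralizer_eq_of_mem (h5 : (Cent R).encard ≤ 5) {x y : R}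
    (hx : rCentralizer x ≠ Set.univ) (hy : rCentralizer y ≠ Set.univ)
    (hxy : y ∈ rCentralizer x) : rCentralizer x = rCentralizer y := by
  have hx_xy : x ∈ rCentralizer (x + y) :=
    mem_rCentralizer_add_self_iff.2 (mem_rCentralizer_comm.1 hxy)
  have hsub : rCentralizer x ⊆ rCentralizer y ∨ rCentralizer y ⊆ rCentralizer x := by
    by_cases hu : rCentralizer (x + y) = Set.univ
    · exact Or.inl fun t ht => rCentralizer_inter_rCentralizer_add_subset x y ⟨ht, hu ▸ trivial⟩
    rcases rCentralizer_eq_or_eq_or_eq_of_mem h5 (mt rCentralizer_eq_univ_iff.2 hx)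
      (mem_rCentralizer_self x) (mem_rCentralizer_comm.1 hxy) hx_xy hx hy hu with h | h | h
    · exact Or.inl h.subset
    · exact Or.inl fun t ht => rCentralizer_inter_rCentralizer_add_subset x y ⟨ht, h ▸ ht⟩
    · refine Or.inr fun t ht => rCentralizer_inter_rCentralizer_add_subset y x ⟨ht, ?_⟩
      rwa [add_comm, ← h]
  rcases hsub with h | h
  · exact rCentralizer_eq_of_subset h5 h hy
  · exact (rCentralizer_eq_of_subset h5 h hx).symm

theorem inter_subset_rCenter_of_mem_Cent (h5 : (Cent R).encard ≤ 5) {X Y : Set R}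
    (hX : X ∈ Cent R) (hY : Y ∈ Cent R) (hXu : X ≠ Set.univ) (hYu : Y ≠ Set.univ)
    (hXY : X ≠ Y) : X ∩ Y ⊆ rCenter R := by
  obtain ⟨a, rfl⟩ : ∃ a, rCentralizer a = X := hX
  obtain ⟨b, rfl⟩ : ∃ b, rCentralizer b = Y := hY
  rintro s ⟨hsa, hsb⟩
  by_contra hs
  have hsu : rCentralizer s ≠ Set.univ := mt rCentralizer_eq_univ_iff.1 hs
  exact hXY ((rCentralizer_eq_of_mem h5 hXu hsu hsa).trans
    (rCentralizer_eq_of_mem h5 hYu hsu hsb).symm)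

end rCentralizer

/-- In a finite `5`-centralizer ring with proper centralizers `A, B, C, D`,
`|R| = |A| + |B| + |C| + |D| - 3|Z(R)|`. -/
theorem five_centralizer_card_eq (R : Type*) [NonUnitalRing R] [Finite R]
    (h5 : (Cent R).ncard = 5) (A B C D : Set R)
    (hA : A ∈ Cent R) (hB : B ∈ Cent R) (hC : C ∈ Cent R) (hD : D ∈ Cent R)
    (hAu : A ≠ Set.univ) (hBu : B ≠ Set.univ) (hCu : C ≠ Set.univ) (hDu : D ≠ Set.univ)
    (hAB : A ≠ B) (hAC : A ≠ C) (hAD : A ≠ D) (hBC : B ≠ C) (hBD : B ≠ D) (hCD : C ≠ D) :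
    (Nat.card R : ℤ) =
      A.ncard + B.ncard + C.ncard + D.ncard - 3 * (rCenter R).ncard := by
  have h5' : (Cent R).encard ≤ 5 := by rw [← (Set.toFinite _).cast_ncard_eq, h5]; rfl
  have hcover : A ∪ B ∪ C ∪ D = Set.univ := by
    refine Set.eq_univ_of_forall fun r => ?_
    have hr := mem_rCentralizer_self r
    rcases Set.eq_or_eq_of_encard_le_five h5' univ_mem_Cent hA hB hC hD hAu.symm hBu.symm
      hCu.symm hDu.symm hAB hAC hAD hBC hBD hCD (Set.mem_range_self r) with h | h | h | h | h
    · exact Or.inl (Or.inl (Or.inl (rCenter_subset_of_mem_Cent hA (rCentralizer_eq_univ_iff.1 h))))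
    all_goals simp only [h] at hr; simp [hr]
  have hZ {X : Set R} (hX : X ∈ Cent R) := rCenter_subset_of_mem_Cent hX
  have hinter {X Y : Set R} := inter_subset_rCenter_of_mem_Cent h5' (X := X) (Y := Y)
  have hcardAB := Set.ncard_union_add_ncard_of_inter_subset (hZ hA) (hZ hB)
    (hinter hA hB hAu hBu hAB)
  have hcardABC := Set.ncard_union_add_ncard_of_inter_subset
    ((hZ hA).trans Set.subset_union_left) (hZ hC) (by
      rw [Set.union_inter_distrib_right]
      exact Set.union_subset (hinter hA hC hAu hCu hAC) (hinter hB hC hBu hCu hBC))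
  have hcardABCD := Set.ncard_union_add_ncard_of_inter_subset (S := A ∪ B ∪ C)
    ((hZ hA).trans (Set.subset_union_left.trans Set.subset_union_left)) (hZ hD) (by
      rw [Set.union_inter_distrib_right, Set.union_inter_distrib_right]
      exact Set.union_subset (Set.union_subset (hinter hA hD hAu hDu hAD)
        (hinter hB hD hBu hDu hBD)) (hinter hC hD hCu hDu hCD))
  rw [hcover, Set.ncard_univ] at hcardABCD
  omega
end

section
/- Let R be a noncommutative finite (not necessarily unital) ring and let p be the smallest prime dividing the order of R. If d(R) = (p² + p − 1)/p³, then |Cent(R)| = p + 2. -/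
/-- The commutativity degree of a finite ring: `d(R) = (1/|R|²) ∑_{r ∈ R} |C(r)|`. -/
noncomputable def commDeg (R : Type*) [NonUnitalRing R] [Fintype R] : ℚ :=
  (∑ r : R, ((rCentralizer r).ncard : ℚ)) / ((Fintype.card R : ℚ)) ^ 2

/-!
Write `Z` for the center and `C(r)` for centralizers; all of them are additive subgroups.
If every prime factor of `|R|` is at least `p`, then every strict inclusion of additive subgroups
multiplies the order by at least `p`. In particular `|C(r)| ≤ |R| / p` for noncentral `r`, and
comparing the resulting upper bound for `d(R)` with the assumed value gives `|R| ≤ p² |Z|`.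
Hence a chain `Z < C(r) < R` is as long as a strict chain can be: `|C(r)| = p |Z|`,
`|R| = p² |Z|`, and no subgroup lies strictly between `Z` and `C(r)`. Applied to
`Z < C(r) ⊓ C(t) ≤ C(r)`, this shows that commuting noncentral elements have equal centralizers,
so the sets `C(r) \ Z` partition `R \ Z` into blocks of size `(p - 1) |Z|`. There are
`(p² - 1) / (p - 1) = p + 1` of them, and the central elements contribute the centralizer `R`.
-/

open Finset

theorem AddSubgroup.mul_card_le_card_of_lt {G : Type*} [AddGroup G] [Finite G] {p : ℕ}
    (hmin : ∀ q : ℕ, q.Prime → q ∣ Nat.card G → p ≤ q) {H K : AddSubgroup G} (hHK : H < K) :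
    p * Nat.card H ≤ Nat.card K := by
  obtain ⟨k, hk⟩ := card_dvd_of_le hHK.le
  have hk1 : k ≠ 1 := fun h => hHK.ne (eq_of_le_of_card_ge hHK.le (by rw [hk, h, mul_one]))
  have hk0 : 0 < k := Nat.pos_of_mul_pos_left (hk ▸ Nat.card_pos)
  have hkG : k ∣ Nat.card G := (Dvd.intro_left _ hk.symm).trans K.card_addSubgroup_dvd_card
  calc p * Nat.card H ≤ k * Nat.card H :=
        Nat.mul_le_mul_right _ ((hmin _ (Nat.minFac_prime hk1)
          ((Nat.minFac_dvd k).trans hkG)).trans (Nat.minFac_le hk0))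
    _ = Nat.card K := by rw [hk, mul_comm]

namespace NonUnitalSubring

variable {R : Type*} [NonUnitalRing R]

theorem mem_centralizer_singleton {r t : R} : t ∈ centralizer {r} ↔ r * t = t * r := by
  simp [mem_centralizer_iff]

theorem mem_centralizer_self (r : R) : r ∈ centralizer {r} :=
  mem_centralizer_singleton.2 rfl

theorem centralizer_eq_top_iff {r : R} : centralizer {r} = ⊤ ↔ r ∈ center R := by
  simp [eq_top_iff, SetLike.le_def, mem_centralizer_iff, mem_center_iff, eq_comm]

theorem center_lt_centralizer {r : R} (hr : r ∉ center R) : center R < centralizer {r} :=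
  (center_le_centralizer _).lt_of_not_ge fun h => hr (h (mem_centralizer_self r))

theorem centralizer_lt_top {r : R} (hr : r ∉ center R) : centralizer {r} < ⊤ :=
  lt_top_iff_ne_top.2 (centralizer_eq_top_iff.not.2 hr)

section Finite

variable [Finite R] {p : ℕ}

theorem mul_card_le_card_of_lt (hmin : ∀ q : ℕ, q.Prime → q ∣ Nat.card R → p ≤ q)
    {S T : NonUnitalSubring R} (hST : S < T) : p * Nat.card S ≤ Nat.card T :=
  AddSubgroup.mul_card_le_card_of_lt hmin (toAddSubgroup_strictMono hST)

theorem mul_card_centralizer_le_card (hmin : ∀ q : ℕ, q.Prime → q ∣ Nat.card R → p ≤ q)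
    {r : R} (hr : r ∉ center R) : p * Nat.card (centralizer {r}) ≤ Nat.card R :=
  (mul_card_le_card_of_lt hmin (centralizer_lt_top hr)).trans_eq AddSubgroup.card_top

theorem centralizer_le_of_commute (hmin : ∀ q : ℕ, q.Prime → q ∣ Nat.card R → p ≤ q)
    (hp1 : 1 < p) (hcard : Nat.card R ≤ p ^ 2 * Nat.card (center R)) {r t : R}
    (hr : r ∉ center R) (hrt : r * t = t * r) : centralizer {r} ≤ centralizer {t} := by
  by_contra h
  have hZI : center R < centralizer {r} ⊓ centralizer {t} :=
    (le_inf (center_le_centralizer _) (center_le_centralizer _)).lt_of_not_ge fun hle =>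
      hr (hle ⟨mem_centralizer_self r, mem_centralizer_singleton.2 hrt.symm⟩)
  have hchain : p * (p * (p * Nat.card (center R))) ≤ p ^ 2 * Nat.card (center R) :=
    calc p * (p * (p * Nat.card (center R)))
        ≤ p * (p * Nat.card ↥(centralizer {r} ⊓ centralizer {t})) := by
          gcongr; exact mul_card_le_card_of_lt hmin hZI
      _ ≤ p * Nat.card (centralizer {r}) := by
          gcongr; exact mul_card_le_card_of_lt hmin (inf_lt_left.2 h)
      _ ≤ Nat.card R := mul_card_centralizer_le_card hmin hr
      _ ≤ p ^ 2 * Nat.card (center R) := hcard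
  nlinarith [Nat.card_pos (α := center R)]

theorem centralizer_eq_of_commute (hmin : ∀ q : ℕ, q.Prime → q ∣ Nat.card R → p ≤ q)
    (hp1 : 1 < p) (hcard : Nat.card R ≤ p ^ 2 * Nat.card (center R)) {r t : R}
    (hr : r ∉ center R) (ht : t ∉ center R) (hrt : r * t = t * r) :
    centralizer {r} = centralizer {t} :=
  (centralizer_le_of_commute hmin hp1 hcard hr hrt).antisymm
    (centralizer_le_of_commute hmin hp1 hcard ht hrt.symm)

theorem card_eq_sq_mul_card_center (hmin : ∀ q : ℕ, q.Prime → q ∣ Nat.card R → p ≤ q)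
    (hcard : Nat.card R ≤ p ^ 2 * Nat.card (center R)) {r : R} (hr : r ∉ center R) :
    Nat.card R = p ^ 2 * Nat.card (center R) :=
  hcard.antisymm <| calc
    p ^ 2 * Nat.card (center R) = p * (p * Nat.card (center R)) := by ring
    _ ≤ p * Nat.card (centralizer {r}) := by
      gcongr; exact mul_card_le_card_of_lt hmin (center_lt_centralizer hr)
    _ ≤ Nat.card R := mul_card_centralizer_le_card hmin hr

theorem card_centralizer_eq (hmin : ∀ q : ℕ, q.Prime → q ∣ Nat.card R → p ≤ q) (hp0 : 0 < p)
    (hcard : Nat.card R ≤ p ^ 2 * Nat.card (center R)) {r : R} (hr : r ∉ center R) :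
    Nat.card (centralizer {r}) = p * Nat.card (center R) := by
  refine le_antisymm (Nat.le_of_mul_le_mul_left ?_ hp0)
    (mul_card_le_card_of_lt hmin (center_lt_centralizer hr))
  calc p * Nat.card (centralizer {r}) ≤ Nat.card R := mul_card_centralizer_le_card hmin hr
    _ ≤ p * (p * Nat.card (center R)) := by rw [← mul_assoc, ← sq]; exact hcard

end Finite

section Fintype

variable [Fintype R] {p : ℕ}

theorem card_filter_mem (S : NonUnitalSubring R) [DecidablePred (· ∈ S)] :
    #{x | x ∈ S} = Nat.card S := by
  rw [← Fintype.card_subtype, Nat.card_eq_fintype_card]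

theorem card_filter_not_mem (S : NonUnitalSubring R) [DecidablePred (· ∈ S)] :
    #{x | x ∉ S} = Nat.card R - Nat.card S := by
  rw [← card_filter_mem S, Nat.card_eq_fintype_card, ← card_univ,
    ← card_filter_add_card_filter_not (s := univ) (· ∈ S), Nat.add_sub_cancel_left]

-- The bound `|C(r)| ≤ |R| / p` for noncentral `r`, summed over `R` and cleared of denominators.
theorem mul_sum_card_centralizer_le (hmin : ∀ q : ℕ, q.Prime → q ∣ Nat.card R → p ≤ q) :
    p * ∑ r : R, Nat.card (centralizer {r}) + Nat.card R * Nat.card (center R) ≤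
      Nat.card R ^ 2 + p * Nat.card R * Nat.card (center R) := by
  classical
  have hterm (r : R) :
      p * Nat.card (centralizer {r}) + Nat.card R * (if r ∈ center R then 1 else 0) ≤
        Nat.card R + p * Nat.card R * (if r ∈ center R then 1 else 0) := by
    split_ifs with hr
    · rw [centralizer_eq_top_iff.2 hr, Nat.card_congr topEquiv.toEquiv]; linarith
    · simpa using mul_card_centralizer_le_card hmin hr
  have hsum := sum_le_sum fun r (_ : r ∈ univ) => hterm r
  simp only [sum_add_distrib, ← mul_sum, sum_boole, sum_const, card_univ,
    ← Nat.card_eq_fintype_card, smul_eq_mul, Nat.cast_id, card_filter_mem] at hsum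
  linarith

open scoped Classical in
theorem card_filter_centralizer_eq (hmin : ∀ q : ℕ, q.Prime → q ∣ Nat.card R → p ≤ q)
    (hp1 : 1 < p) (hcard : Nat.card R ≤ p ^ 2 * Nat.card (center R)) {r : R}
    (hr : r ∉ center R) :
    #{t | t ∉ center R ∧ centralizer {t} = centralizer {r}} =
      p * Nat.card (center R) - Nat.card (center R) := by
  have hfibre : univ.filter (fun t => t ∉ center R ∧ centralizer {t} = centralizer {r}) =
      univ.filter (· ∈ centralizer {r}) \ univ.filter (· ∈ center R) := by
    ext t
    simp only [mem_filter, mem_univ, true_and, mem_sdiff]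
    constructor
    · rintro ⟨ht, htr⟩
      exact ⟨htr ▸ mem_centralizer_self t, ht⟩
    · rintro ⟨hrt, ht⟩
      exact ⟨ht, (centralizer_eq_of_commute hmin hp1 hcard hr ht
        (mem_centralizer_singleton.1 hrt)).symm⟩
  have hsub : univ.filter (· ∈ center R) ⊆ univ.filter (· ∈ centralizer {r}) :=
    monotone_filter_right _ fun _ _ h => center_le_centralizer _ h
  rw [hfibre, card_sdiff_of_subset hsub, card_filter_mem, card_filter_mem,
    card_centralizer_eq hmin (by omega) hcard hr]

open scoped Classical in
theorem card_image_centralizer (hmin : ∀ q : ℕ, q.Prime → q ∣ Nat.card R → p ≤ q)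
    (hp1 : 1 < p) (hcard : Nat.card R ≤ p ^ 2 * Nat.card (center R)) {r₀ : R}
    (hr₀ : r₀ ∉ center R) :
    #((univ.filter (· ∉ center R)).image fun r => centralizer {r}) = p + 1 := by
  set z := Nat.card (center R)
  have hfibre : ∀ S ∈ (univ.filter (· ∉ center R)).image (fun r => centralizer {r}),
      #{t ∈ univ.filter (· ∉ center R) | centralizer {t} = S} = p * z - z := by
    intro S hS
    obtain ⟨r, hr, rfl⟩ := mem_image.1 hS
    rw [filter_filter]
    exact card_filter_centralizer_eq hmin hp1 hcard (mem_filter.1 hr).2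
  have hcount := card_eq_sum_card_image (fun r => centralizer {r}) (univ.filter (· ∉ center R))
  rw [sum_congr rfl hfibre, sum_const, smul_eq_mul, card_filter_not_mem,
    card_eq_sq_mul_card_center hmin hcard hr₀] at hcount
  have hzp : z < p * z := lt_mul_left Nat.card_pos hp1
  have hzp2 : z ≤ p ^ 2 * z := Nat.le_mul_of_pos_left z (by positivity)
  have hfactor : p ^ 2 * z - z = (p + 1) * (p * z - z) := by
    zify [hzp.le, hzp2]; ring
  exact Nat.eq_of_mul_eq_mul_right (Nat.sub_pos_of_lt hzp) (hcount.symm.trans hfactor)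

open scoped Classical in
theorem range_centralizer_eq_insert :
    Set.range (fun r : R => centralizer {r}) =
      insert ⊤ ↑((univ.filter (· ∉ center R)).image fun r => centralizer {r}) := by
  ext S
  simp only [Set.mem_range, Set.mem_insert_iff, coe_image, coe_filter, mem_univ, true_and,
    Set.mem_image, Set.mem_ofPred_eq]
  constructor
  · rintro ⟨r, rfl⟩
    by_cases hr : r ∈ center R
    · exact Or.inl (centralizer_eq_top_iff.2 hr)
    · exact Or.inr ⟨r, hr, rfl⟩
  · rintro (rfl | ⟨r, -, rfl⟩)
    · exact ⟨0, centralizer_eq_top_iff.2 (zero_mem _)⟩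
    · exact ⟨r, rfl⟩

theorem ncard_range_centralizer (hmin : ∀ q : ℕ, q.Prime → q ∣ Nat.card R → p ≤ q)
    (hp1 : 1 < p) (hcard : Nat.card R ≤ p ^ 2 * Nat.card (center R)) {r₀ : R}
    (hr₀ : r₀ ∉ center R) :
    (Set.range fun r : R => centralizer {r}).ncard = p + 2 := by
  classical
  have htop : ⊤ ∉ (univ.filter (· ∉ center R)).image fun r => centralizer {r} := by
    simp only [mem_image, mem_filter, mem_univ, true_and, centralizer_eq_top_iff]
    rintro ⟨r, hr, hr'⟩
    exact hr hr'
  rw [range_centralizer_eq_insert, Set.ncard_insert_of_notMem (by exact_mod_cast htop),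
    Set.ncard_coe_finset, card_image_centralizer hmin hp1 hcard hr₀]

end Fintype

end NonUnitalSubring

open NonUnitalSubring

section

variable {R : Type*} [NonUnitalRing R]

theorem rCentralizer_eq_centralizer (r : R) : rCentralizer r = centralizer {r} := by
  ext s
  simp [rCentralizer, Set.mem_centralizer_iff]

theorem Cent_eq_image : Cent R = SetLike.coe '' Set.range fun r : R => centralizer {r} := by
  rw [Cent, ← Set.range_comp]
  simp only [Function.comp_def, rCentralizer_eq_centralizer]

theorem commDeg_eq_sum_card_centralizer_div [Fintype R] :
    commDeg R = (∑ r : R, Nat.card (centralizer {r}) : ℚ) / Nat.card R ^ 2 := by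
  simp only [commDeg, rCentralizer_eq_centralizer, ← Nat.card_coe_set_eq, SetLike.coe_sort_coe,
    ← Nat.card_eq_fintype_card (α := R)]

theorem card_le_sq_mul_card_center_of_commDeg_eq [Fintype R] {p : ℕ}
    (hmin : ∀ q : ℕ, q.Prime → q ∣ Nat.card R → p ≤ q) (hp1 : 1 < p)
    (hd : commDeg R = ((p : ℚ) ^ 2 + p - 1) / (p : ℚ) ^ 3) :
    Nat.card R ≤ p ^ 2 * Nat.card (center R) := by
  have hsum : (p * ∑ r : R, (Nat.card (centralizer {r}) : ℚ) + Nat.card R * Nat.card (center R)) ≤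
      Nat.card R ^ 2 + p * Nat.card R * Nat.card (center R) := by
    exact_mod_cast mul_sum_card_centralizer_le hmin
  have hn : (0 : ℚ) < Nat.card R := by exact_mod_cast Nat.card_pos
  have hp1' : (1 : ℚ) < p := by exact_mod_cast hp1
  rw [commDeg_eq_sum_card_centralizer_div, div_eq_div_iff (by positivity) (by positivity)] at hd
  have key : ((p : ℚ) - 1) * Nat.card R * (Nat.card R - p ^ 2 * Nat.card (center R)) ≤ 0 := by
    nlinarith [mul_le_mul_of_nonneg_left hsum (sq_nonneg (p : ℚ))]
  have : (Nat.card R : ℚ) ≤ p ^ 2 * Nat.card (center R) := by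
    nlinarith [mul_pos (sub_pos.2 hp1') hn]
  exact_mod_cast this

end

theorem cent_of_commDeg_eq_general (R : Type*) [NonUnitalRing R] [Fintype R]
    (h : ∃ x y : R, x * y ≠ y * x) (p : ℕ) (hp : p.Prime)
    (hmin : ∀ q : ℕ, q.Prime → q ∣ Fintype.card R → p ≤ q)
    (hd : commDeg R = ((p : ℚ) ^ 2 + p - 1) / (p : ℚ) ^ 3) :
    (Cent R).ncard = p + 2 := by
  rw [← Nat.card_eq_fintype_card] at hmin
  obtain ⟨x, y, hxy⟩ := h
  have hy : y ∉ center R := fun hy => hxy (mem_center_iff.1 hy x)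
  have hcard := card_le_sq_mul_card_center_of_commDeg_eq hmin hp.one_lt hd
  rw [Cent_eq_image, Set.ncard_image_of_injective _ SetLike.coe_injective,
    ncard_range_centralizer hmin hp.one_lt hcard hy]

/-- If `p` is the smallest prime dividing `|R|` and `d(R) = (p² + p - 1)/p³`,
then `|Cent(R)| = p + 2`. -/
theorem cent_of_commDeg_eq (R : Type*) [NonUnitalRing R] [Fintype R]
    (h : ∃ x y : R, x * y ≠ y * x) (p : ℕ) (hp : p.Prime) (hdvd : p ∣ Fintype.card R)
    (hmin : ∀ q : ℕ, q.Prime → q ∣ Fintype.card R → p ≤ q)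
    (hd : commDeg R = ((p : ℚ) ^ 2 + p - 1) / (p : ℚ) ^ 3) :
    (Cent R).ncard = p + 2 :=
  cent_of_commDeg_eq_general R h p hp hmin hd
end
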